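/- arXiv:2209.13175 — 3 statements merged into one kernel-verified Lean document; each statement's English description precedes it below -/
import Mathlib

section
/- A finite graph G is a permutation graph (i.e., the intersection graph of a set of segments between two parallel lines, equivalently the graph of inversions of a permutation) if and only if both G and its complement Ḡ are comparability graphs. -/
/-- A module of a simple graph: a nonempty vertex set such that every vertex
outside is adjacent to all of it or to none of it. -/
def IsModule {V : Type*} (G : SimpleGraph V) (M : Set V) : Prop :=
  M.Nonempty ∧ ∀ u ∉ M, (∀ v ∈ M, G.Adj u v) ∨ (∀ v ∈ M, ¬ G.Adj u v)

/-- A transitive orientation of a simple graph: each edge gets exactly one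
direction, and the resulting relation is transitive. -/
def IsTransOrientation {V : Type*} (G : SimpleGraph V) (O : V → V → Prop) : Prop :=
  (∀ u v, O u v → G.Adj u v) ∧
  (∀ u v, G.Adj u v → (O u v ↔ ¬ O v u)) ∧
  (∀ u v w, O u v → O v w → O u w)

/-- A transitive orientation of the subgraph of `G` induced on a vertex set `S`. -/
def IsTransOrientationOn {V : Type*} (G : SimpleGraph V) (S : Set V)
    (O : V → V → Prop) : Prop :=
  (∀ u v, O u v → u ∈ S ∧ v ∈ S ∧ G.Adj u v) ∧
  (∀ u v, u ∈ S → v ∈ S → G.Adj u v → (O u v ↔ ¬ O v u)) ∧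
  (∀ u v w, O u v → O v w → O u w)

/-- The inversion graph of a permutation of Fin n: i < j are adjacent iff the
permutation inverts them. -/
def invGraph {n : ℕ} (π : Equiv.Perm (Fin n)) : SimpleGraph (Fin n) :=
  SimpleGraph.fromRel (fun i j => i < j ∧ π.symm j < π.symm i)

/-- Flipping a transitive orientation. -/
lemma flip_transOrientation {V : Type*} {G : SimpleGraph V} {O : V → V → Prop}
    (h : IsTransOrientation G O) : IsTransOrientation G (fun u v => O v u) := by
  obtain ⟨h1, h2, h3⟩ := h
  refine ⟨fun u v h => (h1 v u h).symm, fun u v hadj => ?_, fun u v w a b => h3 w v u b a⟩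
  have := h2 v u hadj.symm
  tauto

/-- Union of transitive orientations of G and Gᶜ is a strict total order. -/
lemma union_STO {V : Type*} {G : SimpleGraph V} {O1 O2 : V → V → Prop}
    (hO1 : IsTransOrientation G O1) (hO2 : IsTransOrientation Gᶜ O2) :
    IsStrictTotalOrder V (fun u v => O1 u v ∨ O2 u v) := by
  obtain ⟨a1, a2, a3⟩ := hO1
  obtain ⟨b1, b2, b3⟩ := hO2
  refine { trichotomous := ?_, irrefl := ?_, trans := ?_ }
  · -- trichotomous
    intro u v
    by_cases hne : u = v
    · exact fun _ _ => hne
    by_cases hadj : G.Adj u v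
    · by_cases h : O1 u v
      · exact fun h1 _ => absurd (Or.inl h) h1
      · exact fun _ h2 => absurd (Or.inl ((a2 v u hadj.symm).mpr h)) h2
    · have hc : Gᶜ.Adj u v := ⟨hne, hadj⟩
      by_cases h : O2 u v
      · exact fun h1 _ => absurd (Or.inr h) h1
      · exact fun _ h2 => absurd (Or.inr ((b2 v u hc.symm).mpr h)) h2
  · intro u h
    rcases h with h | h
    · exact G.loopless.irrefl u (a1 u u h)
    · exact Gᶜ.loopless.irrefl u (b1 u u h)
  · intro u v w huv hvw
    rcases huv with huv | huv <;> rcases hvw with hvw | hvw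
    · exact Or.inl (a3 u v w huv hvw)
    · -- O1 u v, O2 v w
      have hadjuv := a1 u v huv
      have hnadjvw := b1 v w hvw
      have hne : u ≠ w := by
        rintro rfl
        exact (hnadjvw.symm.2) hadjuv
      by_cases hadj : G.Adj u w
      · left
        by_contra h
        have hwu : O1 w u := by
          have := a2 u w hadj; tauto
        exact (hnadjvw.symm.2) (a1 w v (a3 w u v hwu huv))
      · right
        have hc : Gᶜ.Adj u w := ⟨hne, hadj⟩
        by_contra h
        have hwu : O2 w u := by
          have := b2 u w hc; tauto
        have : O2 v u := b3 v w u hvw hwu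
        exact (b1 v u this).2 hadjuv.symm
    · -- O2 u v, O1 v w
      have hnadjuv := b1 u v huv
      have hadjvw := a1 v w hvw
      have hne : u ≠ w := by
        rintro rfl
        exact hnadjuv.2 hadjvw.symm
      by_cases hadj : G.Adj u w
      · left
        by_contra h
        have hwu : O1 w u := by
          have := a2 u w hadj; tauto
        have : O1 v u := a3 v w u hvw hwu
        exact hnadjuv.2 (a1 v u this).symm
      · right
        have hc : Gᶜ.Adj u w := ⟨hne, hadj⟩
        by_contra h
        have hwu : O2 w u := by
          have := b2 u w hc; tauto
        have : O2 w v := b3 w u v hwu huv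
        exact (b1 w v this).2 hadjvw.symm
    · exact Or.inr (b3 u v w huv hvw)

/-- An order isomorphism onto Fin (card V) from a strict total order. -/
lemma exists_orderEquiv {V : Type*} [Fintype V] (r : V → V → Prop)
    (h : IsStrictTotalOrder V r) :
    ∃ e : V ≃ Fin (Fintype.card V), ∀ u v, r u v ↔ e u < e v := by
  classical
  letI L : LinearOrder V := linearOrderOfSTO r
  let e := (monoEquivOfFin V rfl).symm
  exact ⟨e.toEquiv, fun u v => (e.lt_iff_lt).symm⟩

theorem permutationGraph_iff {V : Type*} [Fintype V] (G : SimpleGraph V) :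
    (∃ (n : ℕ) (π : Equiv.Perm (Fin n)), Nonempty (G ≃g invGraph π)) ↔
      ((∃ O : V → V → Prop, IsTransOrientation G O) ∧
       (∃ O : V → V → Prop, IsTransOrientation Gᶜ O)) := by
  constructor
  · rintro ⟨n, π, ⟨φ⟩⟩
    have hiadj : ∀ i j : Fin n, (invGraph π).Adj i j ↔
        i ≠ j ∧ ((i < j ∧ π.symm j < π.symm i) ∨ (j < i ∧ π.symm i < π.symm j)) := by
      intro i j
      simp [invGraph, SimpleGraph.fromRel_adj]
    constructor
    · refine ⟨fun u v => φ u < φ v ∧ π.symm (φ v) < π.symm (φ u), ?_, ?_, ?_⟩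
      · intro u v ⟨h1, h2⟩
        rw [← φ.map_adj_iff, hiadj]
        exact ⟨h1.ne, Or.inl ⟨h1, h2⟩⟩
      · intro u v hadj
        rw [← φ.map_adj_iff, hiadj] at hadj
        obtain ⟨hne, h | h⟩ := hadj
        · simp only [h, and_self, true_iff]
          rintro ⟨h1, h2⟩
          exact absurd h.1 (asymm h1)
        · constructor
          · rintro ⟨h1, h2⟩
            exact absurd h.1 (asymm h1)
          · intro hn
            exact absurd h (by tauto)
      · rintro u v w ⟨h1, h2⟩ ⟨h3, h4⟩
        exact ⟨h1.trans h3, h4.trans h2⟩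
    · refine ⟨fun u v => φ u < φ v ∧ π.symm (φ u) < π.symm (φ v), ?_, ?_, ?_⟩
      · intro u v ⟨h1, h2⟩
        rw [SimpleGraph.compl_adj]
        refine ⟨fun h => absurd (congrArg φ h) h1.ne, fun h => ?_⟩
        rw [← φ.map_adj_iff, hiadj] at h
        obtain ⟨hne, ⟨ha, hb⟩ | ⟨ha, hb⟩⟩ := h
        · exact absurd h2 (asymm hb)
        · exact absurd h1 (asymm ha)
      · intro u v hadj
        rw [SimpleGraph.compl_adj] at hadj
        obtain ⟨hne, hnadj⟩ := hadj
        rw [← φ.map_adj_iff, hiadj] at hnadj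
        have hne' : φ u ≠ φ v := fun h => hne (φ.toEquiv.injective h)
        have hinv : π.symm (φ u) ≠ π.symm (φ v) := fun h => hne' (π.symm.injective h)
        have hAB : ¬((φ u < φ v ∧ π.symm (φ v) < π.symm (φ u)) ∨
            (φ v < φ u ∧ π.symm (φ u) < π.symm (φ v))) := fun h => hnadj ⟨hne', h⟩
        rcases hne'.lt_or_gt with h | h
        · have h2 : π.symm (φ u) < π.symm (φ v) := by
            rcases hinv.lt_or_gt with h' | h'
            · exact h'
            · exact absurd (Or.inl ⟨h, h'⟩) hAB
          constructor
          · intro _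
            rintro ⟨h3, _⟩
            exact absurd h (asymm h3)
          · intro _
            exact ⟨h, h2⟩
        · have h2 : π.symm (φ v) < π.symm (φ u) := by
            rcases hinv.lt_or_gt with h' | h'
            · exact absurd (Or.inr ⟨h, h'⟩) hAB
            · exact h'
          constructor
          · rintro ⟨h3, _⟩
            exact absurd h (asymm h3)
          · intro hn
            exact absurd ⟨h, h2⟩ hn
      · rintro u v w ⟨h1, h2⟩ ⟨h3, h4⟩
        exact ⟨h1.trans h3, h2.trans h4⟩
  · rintro ⟨⟨O1, hO1⟩, ⟨O2, hO2⟩⟩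
    classical
    set R1 : V → V → Prop := fun u v => O1 u v ∨ O2 u v with hR1
    set R2 : V → V → Prop := fun u v => O1 v u ∨ O2 u v with hR2
    have hS1 : IsStrictTotalOrder V R1 := union_STO hO1 hO2
    have hS2 : IsStrictTotalOrder V R2 := union_STO (flip_transOrientation hO1) hO2
    obtain ⟨e1, he1⟩ := exists_orderEquiv R1 hS1
    obtain ⟨e2, he2⟩ := exists_orderEquiv R2 hS2
    refine ⟨Fintype.card V, e1.symm.trans e2 |>.symm, ⟨?_⟩⟩
    -- π = (e1.symm.trans e2).symm : so π.symm = e2 ∘ e1.symm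
    refine ⟨e1, ?_⟩
    intro u' v'
    set u := u' with hu
    set v := v' with hv
    have hiadj : ∀ i j : Fin (Fintype.card V), (invGraph ((e1.symm.trans e2).symm)).Adj i j ↔
        i ≠ j ∧ ((i < j ∧ e2 (e1.symm j) < e2 (e1.symm i)) ∨ (j < i ∧ e2 (e1.symm i) < e2 (e1.symm j))) := by
      intro i j
      simp [invGraph, SimpleGraph.fromRel_adj, Equiv.symm_symm]
    rw [hiadj]
    simp only [Equiv.symm_apply_apply, ne_eq, EmbeddingLike.apply_eq_iff_eq]
    rw [← he1, ← he1, ← he2, ← he2]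
    obtain ⟨a1, a2, a3⟩ := hO1
    obtain ⟨b1, b2, b3⟩ := hO2
    constructor
    · rintro ⟨hne, ⟨h1, h2⟩ | ⟨h1, h2⟩⟩
      · -- R1 u v and R2 v u
        rcases h1 with h | h
        · exact a1 u v h
        · rcases h2 with h' | h'
          · exact a1 u v h'
          · exact absurd ((b2 u v (b1 u v h)).mp h) (not_not_intro h')
      · rcases h1 with h | h
        · exact (a1 v u h).symm
        · rcases h2 with h' | h'
          · exact (a1 v u h').symm
          · exact absurd ((b2 v u (b1 v u h)).mp h) (not_not_intro h')
    · intro hadj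
      refine ⟨hadj.ne, ?_⟩
      by_cases h : O1 u v
      · exact Or.inl ⟨Or.inl h, Or.inl h⟩
      · have h' : O1 v u := (a2 v u hadj.symm).mpr h
        exact Or.inr ⟨Or.inl h', Or.inl h'⟩
end

section
/- The problem TotalOrdering reduces to simultaneous transitive orientation: given a finite set S and a set T of triples from S, there exists a linear order < on S with x < y < z or z < y < x for each triple (x,y,z) ∈ T if and only if the graphs G₀, G₁, …, G_t admit transitive orientations agreeing on shared edges, where G₀ is the complete graph on S and G_i (for the i-th triple (x_i,y_i,z_i)) is the graph on {x_i, y_i, z_i, a_i, b_i} with edges {x_i a_i, x_i y_i, x_i z_i, y_i z_i, z_i b_i} and a_i, b_i fresh vertices. -/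
/-- The graph G₀ of the reduction: the complete graph on the S-part of the
vertex universe S ⊕ (Fin t × Bool). -/
def redG0 (S : Type*) (t : ℕ) : SimpleGraph (S ⊕ (Fin t × Bool)) :=
  SimpleGraph.fromRel (fun p q => ∃ u v : S, p = Sum.inl u ∧ q = Sum.inl v)

/-- The gadget graph G_i for the i-th triple (x,y,z): edges x-aᵢ, x-y, x-z,
y-z, z-bᵢ, where aᵢ = (i, false) and bᵢ = (i, true) are fresh vertices. -/
def redGi {S : Type*} {t : ℕ} (f : Fin t → S × S × S) (i : Fin t) :
    SimpleGraph (S ⊕ (Fin t × Bool)) :=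
  SimpleGraph.fromRel (fun p q =>
    (p = Sum.inl (f i).1 ∧ q = Sum.inr (i, false)) ∨
    (p = Sum.inl (f i).1 ∧ q = Sum.inl (f i).2.1) ∨
    (p = Sum.inl (f i).1 ∧ q = Sum.inl (f i).2.2) ∨
    (p = Sum.inl (f i).2.1 ∧ q = Sum.inl (f i).2.2) ∨
    (p = Sum.inl (f i).2.2 ∧ q = Sum.inr (i, true)))

section Aux

set_option maxRecDepth 10000
set_option maxHeartbeats 1000000
set_option linter.unreachableTactic false
set_option linter.unusedTactic false

variable {S : Type*} {t : ℕ}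

lemma redG0_adj' (p q : S ⊕ (Fin t × Bool)) :
    (redG0 S t).Adj p q ↔ p ≠ q ∧ (∃ u, p = Sum.inl u) ∧ (∃ v, q = Sum.inl v) := by
  simp only [redG0, SimpleGraph.fromRel_adj]
  aesop

/-- The intended orientation of the gadget graph, given a linear order on `S`. -/
def gadgetOrient [LinearOrder S] (f : Fin t → S × S × S) (i : Fin t)
    (p q : S ⊕ (Fin t × Bool)) : Prop :=
  (p = Sum.inl (f i).1 ∧ q = Sum.inl (f i).2.1 ∧ (f i).1 < (f i).2.1) ∨
  (p = Sum.inl (f i).2.1 ∧ q = Sum.inl (f i).1 ∧ (f i).2.1 < (f i).1) ∨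
  (p = Sum.inl (f i).1 ∧ q = Sum.inl (f i).2.2 ∧ (f i).1 < (f i).2.2) ∨
  (p = Sum.inl (f i).2.2 ∧ q = Sum.inl (f i).1 ∧ (f i).2.2 < (f i).1) ∨
  (p = Sum.inl (f i).2.1 ∧ q = Sum.inl (f i).2.2 ∧ (f i).2.1 < (f i).2.2) ∨
  (p = Sum.inl (f i).2.2 ∧ q = Sum.inl (f i).2.1 ∧ (f i).2.2 < (f i).2.1) ∨
  (p = Sum.inl (f i).1 ∧ q = Sum.inr (i, false) ∧ (f i).1 < (f i).2.1) ∨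
  (p = Sum.inr (i, false) ∧ q = Sum.inl (f i).1 ∧ (f i).2.1 < (f i).1) ∨
  (p = Sum.inr (i, true) ∧ q = Sum.inl (f i).2.2 ∧ (f i).1 < (f i).2.1) ∨
  (p = Sum.inl (f i).2.2 ∧ q = Sum.inr (i, true) ∧ (f i).2.1 < (f i).1)

variable [LinearOrder S] {f : Fin t → S × S × S} {i : Fin t}

lemma gadgetOrient_adj
    (hd1 : (f i).1 ≠ (f i).2.1) (hd2 : (f i).1 ≠ (f i).2.2) (hd3 : (f i).2.1 ≠ (f i).2.2)
    {p q : S ⊕ (Fin t × Bool)} (h : gadgetOrient f i p q) : (redGi f i).Adj p q := by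
  unfold gadgetOrient at h
  simp only [redGi, SimpleGraph.fromRel_adj]
  rcases h with ⟨rfl,rfl,hc⟩|⟨rfl,rfl,hc⟩|⟨rfl,rfl,hc⟩|⟨rfl,rfl,hc⟩|⟨rfl,rfl,hc⟩|⟨rfl,rfl,hc⟩|⟨rfl,rfl,hc⟩|⟨rfl,rfl,hc⟩|⟨rfl,rfl,hc⟩|⟨rfl,rfl,hc⟩ <;>
    simp_all [hc.ne, hc.ne']

lemma gadgetOrient_asymm
    (hd1 : (f i).1 ≠ (f i).2.1) (hd2 : (f i).1 ≠ (f i).2.2) (hd3 : (f i).2.1 ≠ (f i).2.2)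
    {p q : S ⊕ (Fin t × Bool)} (h1 : gadgetOrient f i p q) (h2 : gadgetOrient f i q p) :
    False := by
  unfold gadgetOrient at h1 h2
  rcases h1 with ⟨rfl,rfl,hc⟩|⟨rfl,rfl,hc⟩|⟨rfl,rfl,hc⟩|⟨rfl,rfl,hc⟩|⟨rfl,rfl,hc⟩|⟨rfl,rfl,hc⟩|⟨rfl,rfl,hc⟩|⟨rfl,rfl,hc⟩|⟨rfl,rfl,hc⟩|⟨rfl,rfl,hc⟩ <;>
  rcases h2 with ⟨e1,e2,hc'⟩|⟨e1,e2,hc'⟩|⟨e1,e2,hc'⟩|⟨e1,e2,hc'⟩|⟨e1,e2,hc'⟩|⟨e1,e2,hc'⟩|⟨e1,e2,hc'⟩|⟨e1,e2,hc'⟩|⟨e1,e2,hc'⟩|⟨e1,e2,hc'⟩ <;>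
  simp only [Sum.inl.injEq, Sum.inr.injEq, Prod.mk.injEq, reduceCtorEq, and_true, true_and,
    and_false, false_and] at e1 e2 <;>
  first
    | exact e1
    | exact e2
    | exact hd1 e1 | exact hd1 e2 | exact hd1 e1.symm | exact hd1 e2.symm
    | exact hd2 e1 | exact hd2 e2 | exact hd2 e1.symm | exact hd2 e2.symm
    | exact hd3 e1 | exact hd3 e2 | exact hd3 e1.symm | exact hd3 e2.symm
    | exact lt_asymm hc hc'

lemma gadgetOrient_total
    (hd1 : (f i).1 ≠ (f i).2.1) (hd2 : (f i).1 ≠ (f i).2.2) (hd3 : (f i).2.1 ≠ (f i).2.2)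
    {p q : S ⊕ (Fin t × Bool)} (h : (redGi f i).Adj p q) :
    gadgetOrient f i p q ∨ gadgetOrient f i q p := by
  simp only [redGi, SimpleGraph.fromRel_adj] at h
  obtain ⟨hne, hrel⟩ := h
  unfold gadgetOrient
  rcases hrel with (⟨rfl,rfl⟩|⟨rfl,rfl⟩|⟨rfl,rfl⟩|⟨rfl,rfl⟩|⟨rfl,rfl⟩)|(⟨rfl,rfl⟩|⟨rfl,rfl⟩|⟨rfl,rfl⟩|⟨rfl,rfl⟩|⟨rfl,rfl⟩)
  · rcases lt_or_gt_of_ne hd1 with hc|hc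
    · exact Or.inl (Or.inr (Or.inr (Or.inr (Or.inr (Or.inr (Or.inr (Or.inl ⟨rfl,rfl,hc⟩)))))))
    · exact Or.inr (Or.inr (Or.inr (Or.inr (Or.inr (Or.inr (Or.inr (Or.inr (Or.inl ⟨rfl,rfl,hc⟩))))))))
  · rcases lt_or_gt_of_ne hd1 with hc|hc
    · exact Or.inl (Or.inl ⟨rfl,rfl,hc⟩)
    · exact Or.inr (Or.inr (Or.inl ⟨rfl,rfl,hc⟩))
  · rcases lt_or_gt_of_ne hd2 with hc|hc
    · exact Or.inl (Or.inr (Or.inr (Or.inl ⟨rfl,rfl,hc⟩)))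
    · exact Or.inr (Or.inr (Or.inr (Or.inr (Or.inl ⟨rfl,rfl,hc⟩))))
  · rcases lt_or_gt_of_ne hd3 with hc|hc
    · exact Or.inl (Or.inr (Or.inr (Or.inr (Or.inr (Or.inl ⟨rfl,rfl,hc⟩)))))
    · exact Or.inr (Or.inr (Or.inr (Or.inr (Or.inr (Or.inr (Or.inl ⟨rfl,rfl,hc⟩))))))
  · rcases lt_or_gt_of_ne hd1 with hc|hc
    · exact Or.inr (Or.inr (Or.inr (Or.inr (Or.inr (Or.inr (Or.inr (Or.inr (Or.inr (Or.inl ⟨rfl,rfl,hc⟩)))))))))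
    · exact Or.inl (Or.inr (Or.inr (Or.inr (Or.inr (Or.inr (Or.inr (Or.inr (Or.inr (Or.inr (⟨rfl,rfl,hc⟩))))))))))
  · rcases lt_or_gt_of_ne hd1 with hc|hc
    · exact Or.inr (Or.inr (Or.inr (Or.inr (Or.inr (Or.inr (Or.inr (Or.inl ⟨rfl,rfl,hc⟩)))))))
    · exact Or.inl (Or.inr (Or.inr (Or.inr (Or.inr (Or.inr (Or.inr (Or.inr (Or.inl ⟨rfl,rfl,hc⟩))))))))
  · rcases lt_or_gt_of_ne hd1 with hc|hc
    · exact Or.inr (Or.inl ⟨rfl,rfl,hc⟩)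
    · exact Or.inl (Or.inr (Or.inl ⟨rfl,rfl,hc⟩))
  · rcases lt_or_gt_of_ne hd2 with hc|hc
    · exact Or.inr (Or.inr (Or.inr (Or.inl ⟨rfl,rfl,hc⟩)))
    · exact Or.inl (Or.inr (Or.inr (Or.inr (Or.inl ⟨rfl,rfl,hc⟩))))
  · rcases lt_or_gt_of_ne hd3 with hc|hc
    · exact Or.inr (Or.inr (Or.inr (Or.inr (Or.inr (Or.inl ⟨rfl,rfl,hc⟩)))))
    · exact Or.inl (Or.inr (Or.inr (Or.inr (Or.inr (Or.inr (Or.inl ⟨rfl,rfl,hc⟩))))))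
  · rcases lt_or_gt_of_ne hd1 with hc|hc
    · exact Or.inl (Or.inr (Or.inr (Or.inr (Or.inr (Or.inr (Or.inr (Or.inr (Or.inr (Or.inl ⟨rfl,rfl,hc⟩)))))))))
    · exact Or.inr (Or.inr (Or.inr (Or.inr (Or.inr (Or.inr (Or.inr (Or.inr (Or.inr (Or.inr (⟨rfl,rfl,hc⟩))))))))))

lemma gadgetOrient_trans
    (hd1 : (f i).1 ≠ (f i).2.1) (hd2 : (f i).1 ≠ (f i).2.2) (hd3 : (f i).2.1 ≠ (f i).2.2)
    (hcase : ((f i).1 < (f i).2.1 ∧ (f i).2.1 < (f i).2.2) ∨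
        ((f i).2.2 < (f i).2.1 ∧ (f i).2.1 < (f i).1))
    {p q r : S ⊕ (Fin t × Bool)} (h1 : gadgetOrient f i p q) (h2 : gadgetOrient f i q r) :
    gadgetOrient f i p r := by
  unfold gadgetOrient at h1 h2 ⊢
  rcases h1 with ⟨rfl,rfl,hc⟩|⟨rfl,rfl,hc⟩|⟨rfl,rfl,hc⟩|⟨rfl,rfl,hc⟩|⟨rfl,rfl,hc⟩|⟨rfl,rfl,hc⟩|⟨rfl,rfl,hc⟩|⟨rfl,rfl,hc⟩|⟨rfl,rfl,hc⟩|⟨rfl,rfl,hc⟩ <;>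
  rcases h2 with ⟨e1,rfl,hc'⟩|⟨e1,rfl,hc'⟩|⟨e1,rfl,hc'⟩|⟨e1,rfl,hc'⟩|⟨e1,rfl,hc'⟩|⟨e1,rfl,hc'⟩|⟨e1,rfl,hc'⟩|⟨e1,rfl,hc'⟩|⟨e1,rfl,hc'⟩|⟨e1,rfl,hc'⟩ <;>
  simp only [Sum.inl.injEq, Sum.inr.injEq, Prod.mk.injEq, reduceCtorEq, and_true, true_and,
    and_false, false_and] at e1 <;>
  first
    | exact e1.elim
    | exact (hd1 e1).elim | exact (hd1 e1.symm).elim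
    | exact (hd2 e1).elim | exact (hd2 e1.symm).elim
    | exact (hd3 e1).elim | exact (hd3 e1.symm).elim
    | exact (lt_asymm hc hc').elim
    | exact Or.inr (Or.inr (Or.inl ⟨rfl, rfl, hc.trans hc'⟩))
    | exact Or.inr (Or.inr (Or.inr (Or.inl ⟨rfl, rfl, hc.trans hc'⟩)))
    | (rcases hcase with ⟨ha, hb⟩ | ⟨ha, hb⟩ <;>
        first
          | exact (lt_asymm hc ha).elim | exact (lt_asymm hc hb).elim
          | exact (lt_asymm hc' ha).elim | exact (lt_asymm hc' hb).elim
          | exact (lt_asymm hc (ha.trans hb)).elim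
          | exact (lt_asymm hc' (ha.trans hb)).elim
          | exact (lt_asymm (hc.trans hc') ha).elim
          | exact (lt_asymm (hc.trans hc') hb).elim
          | exact (lt_asymm (hc.trans hc') (ha.trans hb)).elim)

lemma gadgetOrient_lt {u v : S} (h : gadgetOrient f i (Sum.inl u) (Sum.inl v)) : u < v := by
  unfold gadgetOrient at h
  rcases h with ⟨e1,e2,hc⟩|⟨e1,e2,hc⟩|⟨e1,e2,hc⟩|⟨e1,e2,hc⟩|⟨e1,e2,hc⟩|⟨e1,e2,hc⟩|⟨e1,e2,hc⟩|⟨e1,e2,hc⟩|⟨e1,e2,hc⟩|⟨e1,e2,hc⟩ <;>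
    simp only [Sum.inl.injEq, reduceCtorEq] at e1 e2 <;>
    first | exact e1.elim | exact e2.elim | (subst e1; subst e2; exact hc)

lemma redGi_adj_cross {j : Fin t} (hij : i ≠ j) {p q : S ⊕ (Fin t × Bool)}
    (h1 : (redGi f i).Adj p q) (h2 : (redGi f j).Adj p q) :
    ∃ u v, p = Sum.inl u ∧ q = Sum.inl v := by
  simp only [redGi, SimpleGraph.fromRel_adj] at h1 h2
  obtain ⟨-, hr1⟩ := h1
  obtain ⟨-, hr2⟩ := h2
  rcases p with u | ⟨k, b⟩
  · rcases q with v | ⟨k', b'⟩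
    · exact ⟨u, v, rfl, rfl⟩
    · exfalso
      have e1 : k' = i := by
        rcases hr1 with (⟨_,e⟩|⟨_,e⟩|⟨_,e⟩|⟨_,e⟩|⟨_,e⟩)|(⟨e,_⟩|⟨e,_⟩|⟨e,_⟩|⟨e,_⟩|⟨e,_⟩) <;>
          simp_all
      have e2 : k' = j := by
        rcases hr2 with (⟨_,e⟩|⟨_,e⟩|⟨_,e⟩|⟨_,e⟩|⟨_,e⟩)|(⟨e,_⟩|⟨e,_⟩|⟨e,_⟩|⟨e,_⟩|⟨e,_⟩) <;>
          simp_all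
      exact hij (e1 ▸ e2)
  · exfalso
    have e1 : k = i := by
      rcases hr1 with (⟨e,_⟩|⟨e,_⟩|⟨e,_⟩|⟨e,_⟩|⟨e,_⟩)|(⟨_,e⟩|⟨_,e⟩|⟨_,e⟩|⟨_,e⟩|⟨_,e⟩) <;>
        simp_all
    have e2 : k = j := by
      rcases hr2 with (⟨e,_⟩|⟨e,_⟩|⟨e,_⟩|⟨e,_⟩|⟨e,_⟩)|(⟨_,e⟩|⟨_,e⟩|⟨_,e⟩|⟨_,e⟩|⟨_,e⟩) <;>
        simp_all
    exact hij (e1 ▸ e2)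

lemma fwd (f : Fin t → S × S × S)
    (hdist : ∀ i, (f i).1 ≠ (f i).2.1 ∧ (f i).1 ≠ (f i).2.2 ∧ (f i).2.1 ≠ (f i).2.2)
    (h : ∀ i : Fin t, ((f i).1 < (f i).2.1 ∧ (f i).2.1 < (f i).2.2) ∨
        ((f i).2.2 < (f i).2.1 ∧ (f i).2.1 < (f i).1)) :
    ∃ (O0 : (S ⊕ (Fin t × Bool)) → (S ⊕ (Fin t × Bool)) → Prop)
       (Oi : Fin t → (S ⊕ (Fin t × Bool)) → (S ⊕ (Fin t × Bool)) → Prop),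
        IsTransOrientation (redG0 S t) O0 ∧
        (∀ i, IsTransOrientation (redGi f i) (Oi i)) ∧
        (∀ i p q, (redG0 S t).Adj p q → (redGi f i).Adj p q → (O0 p q ↔ Oi i p q)) ∧
        (∀ i j p q, (redGi f i).Adj p q → (redGi f j).Adj p q →
          (Oi i p q ↔ Oi j p q)) := by
  refine ⟨fun p q => ∃ u v : S, p = Sum.inl u ∧ q = Sum.inl v ∧ u < v, gadgetOrient f,
    ⟨?_, ?_, ?_⟩, ?_, ?_, ?_⟩
  · rintro p q ⟨u, v, rfl, rfl, huv⟩
    simp [redG0, SimpleGraph.fromRel_adj, huv.ne]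
  · intro p q hadj
    rw [redG0_adj'] at hadj
    obtain ⟨hne, ⟨u, rfl⟩, ⟨v, rfl⟩⟩ := hadj
    have hne' : u ≠ v := fun h => hne (by rw [h])
    constructor
    · rintro ⟨u', v', e1, e2, h3⟩ ⟨u'', v'', e4, e5, h6⟩
      simp only [Sum.inl.injEq] at e1 e2 e4 e5
      subst e1; subst e2; subst e4; subst e5
      exact lt_asymm h3 h6
    · intro hno
      rcases lt_or_gt_of_ne hne' with hlt | hlt
      · exact ⟨u, v, rfl, rfl, hlt⟩
      · exact absurd ⟨v, u, rfl, rfl, hlt⟩ hno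
  · rintro p q r ⟨u, v, rfl, rfl, h1⟩ ⟨u', v', he, rfl, h2⟩
    simp only [Sum.inl.injEq] at he
    subst he
    exact ⟨_, _, rfl, rfl, h1.trans h2⟩
  · intro i
    obtain ⟨hd1, hd2, hd3⟩ := hdist i
    exact ⟨fun u v ho => gadgetOrient_adj hd1 hd2 hd3 ho,
      fun u v hadj => ⟨fun h1 h2 => gadgetOrient_asymm hd1 hd2 hd3 h1 h2,
        fun hn => (gadgetOrient_total hd1 hd2 hd3 hadj).resolve_right hn⟩,
      fun u v w h1 h2 => gadgetOrient_trans hd1 hd2 hd3 (h i) h1 h2⟩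
  · intro i p q h0 hi
    obtain ⟨hd1, hd2, hd3⟩ := hdist i
    rw [redG0_adj'] at h0
    obtain ⟨hne, ⟨u, rfl⟩, ⟨v, rfl⟩⟩ := h0
    constructor
    · rintro ⟨u', v', e1, e2, hlt⟩
      simp only [Sum.inl.injEq] at e1 e2
      subst e1; subst e2
      rcases gadgetOrient_total hd1 hd2 hd3 hi with hE | hE
      · exact hE
      · exact absurd hlt (lt_asymm (gadgetOrient_lt hE))
    · intro hE
      exact ⟨u, v, rfl, rfl, gadgetOrient_lt hE⟩
  · intro i j p q hi hj
    rcases eq_or_ne i j with rfl | hij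
    · rfl
    · obtain ⟨u, v, rfl, rfl⟩ := redGi_adj_cross hij hi hj
      obtain ⟨hd1, hd2, hd3⟩ := hdist i
      obtain ⟨hd1', hd2', hd3'⟩ := hdist j
      constructor
      · intro hE
        rcases gadgetOrient_total hd1' hd2' hd3' hj with hE' | hE'
        · exact hE'
        · exact absurd (gadgetOrient_lt hE) (lt_asymm (gadgetOrient_lt hE'))
      · intro hE
        rcases gadgetOrient_total hd1 hd2 hd3 hi with hE' | hE'
        · exact hE'
        · exact absurd (gadgetOrient_lt hE) (lt_asymm (gadgetOrient_lt hE'))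

end Aux

theorem totalOrdering_iff_simOrient (S : Type*) [Fintype S] (t : ℕ)
    (f : Fin t → S × S × S)
    (hdist : ∀ i, (f i).1 ≠ (f i).2.1 ∧ (f i).1 ≠ (f i).2.2 ∧ (f i).2.1 ≠ (f i).2.2) :
    (∃ l : LinearOrder S, ∀ i : Fin t,
        (l.lt (f i).1 (f i).2.1 ∧ l.lt (f i).2.1 (f i).2.2) ∨
        (l.lt (f i).2.2 (f i).2.1 ∧ l.lt (f i).2.1 (f i).1)) ↔
    (∃ (O0 : (S ⊕ (Fin t × Bool)) → (S ⊕ (Fin t × Bool)) → Prop)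
       (Oi : Fin t → (S ⊕ (Fin t × Bool)) → (S ⊕ (Fin t × Bool)) → Prop),
        IsTransOrientation (redG0 S t) O0 ∧
        (∀ i, IsTransOrientation (redGi f i) (Oi i)) ∧
        (∀ i p q, (redG0 S t).Adj p q → (redGi f i).Adj p q → (O0 p q ↔ Oi i p q)) ∧
        (∀ i j p q, (redGi f i).Adj p q → (redGi f j).Adj p q →
          (Oi i p q ↔ Oi j p q))) := by
  constructor
  · rintro ⟨l, hl⟩
    letI := l
    exact fwd f hdist hl
  · rintro ⟨O0, Oi, ⟨hO0a, hO0b, hO0c⟩, hOi, hagree0, _⟩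
    classical
    set r : S → S → Prop := fun u v => O0 (Sum.inl u) (Sum.inl v) with hr
    have hadj0 : ∀ u v : S, u ≠ v → (redG0 S t).Adj (Sum.inl u) (Sum.inl v) := by
      intro u v huv
      rw [redG0_adj']
      exact ⟨by simp [huv], ⟨u, rfl⟩, ⟨v, rfl⟩⟩
    haveI : IsTrans S r := ⟨fun a b c hab hbc => hO0c _ _ _ hab hbc⟩
    haveI : IsIrrefl S r := ⟨fun a ha => (redG0 S t).irrefl (hO0a _ _ ha)⟩
    haveI : IsTrichotomous S r := by
      constructor
      intro a b
      rcases eq_or_ne a b with rfl | hne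
      · exact fun _ _ => rfl
      · by_cases h : r a b
        · exact fun h1 _ => absurd h h1
        · intro _ h'
          exfalso
          exact h ((hO0b _ _ (hadj0 a b hne)).mpr h')
    haveI : IsStrictTotalOrder S r := {}
    refine ⟨linearOrderOfSTO r, fun i => ?_⟩
    obtain ⟨hd1, hd2, hd3⟩ := hdist i
    obtain ⟨hia, hib, hic⟩ := hOi i
    -- adjacency facts in the gadget
    have adjXA : (redGi f i).Adj (Sum.inl (f i).1) (Sum.inr (i, false)) := by
      simp [redGi, SimpleGraph.fromRel_adj]
    have adjZB : (redGi f i).Adj (Sum.inl (f i).2.2) (Sum.inr (i, true)) := by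
      simp [redGi, SimpleGraph.fromRel_adj]
    have adjXY : (redGi f i).Adj (Sum.inl (f i).1) (Sum.inl (f i).2.1) := by
      simp [redGi, SimpleGraph.fromRel_adj, hd1, hd2, hd3, hd1.symm, hd2.symm, hd3.symm]
    have adjXZ : (redGi f i).Adj (Sum.inl (f i).1) (Sum.inl (f i).2.2) := by
      simp [redGi, SimpleGraph.fromRel_adj, hd1, hd2, hd3, hd1.symm, hd2.symm, hd3.symm]
    have adjYZ : (redGi f i).Adj (Sum.inl (f i).2.1) (Sum.inl (f i).2.2) := by
      simp [redGi, SimpleGraph.fromRel_adj, hd1, hd2, hd3, hd1.symm, hd2.symm, hd3.symm]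
    have nadjYA : ¬ (redGi f i).Adj (Sum.inl (f i).2.1) (Sum.inr (i, false)) := by
      simp [redGi, SimpleGraph.fromRel_adj, hd1, hd2, hd3, hd1.symm, hd2.symm, hd3.symm]
    have nadjZA : ¬ (redGi f i).Adj (Sum.inl (f i).2.2) (Sum.inr (i, false)) := by
      simp [redGi, SimpleGraph.fromRel_adj, hd1, hd2, hd3, hd1.symm, hd2.symm, hd3.symm]
    have nadjXB : ¬ (redGi f i).Adj (Sum.inl (f i).1) (Sum.inr (i, true)) := by
      simp [redGi, SimpleGraph.fromRel_adj, hd1, hd2, hd3, hd1.symm, hd2.symm, hd3.symm]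
    have nadjBY : ¬ (redGi f i).Adj (Sum.inr (i, true)) (Sum.inl (f i).2.1) := by
      simp [redGi, SimpleGraph.fromRel_adj, hd1, hd2, hd3, hd1.symm, hd2.symm, hd3.symm]
    have nadjAY : ¬ (redGi f i).Adj (Sum.inr (i, false)) (Sum.inl (f i).2.1) := by
      simp [redGi, SimpleGraph.fromRel_adj, hd1, hd2, hd3, hd1.symm, hd2.symm, hd3.symm]
    have nadjAZ : ¬ (redGi f i).Adj (Sum.inr (i, false)) (Sum.inl (f i).2.2) := by
      simp [redGi, SimpleGraph.fromRel_adj, hd1, hd2, hd3, hd1.symm, hd2.symm, hd3.symm]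
    have nadjBX : ¬ (redGi f i).Adj (Sum.inr (i, true)) (Sum.inl (f i).1) := by
      simp [redGi, SimpleGraph.fromRel_adj, hd1, hd2, hd3, hd1.symm, hd2.symm, hd3.symm]
    have nadjYB : ¬ (redGi f i).Adj (Sum.inl (f i).2.1) (Sum.inr (i, true)) := by
      simp [redGi, SimpleGraph.fromRel_adj, hd1, hd2, hd3, hd1.symm, hd2.symm, hd3.symm]
    -- transfer from gadget orientation to O0
    have trans0 : ∀ u v : S, u ≠ v → (redGi f i).Adj (Sum.inl u) (Sum.inl v) →
        Oi i (Sum.inl u) (Sum.inl v) → r u v := by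
      intro u v huv hadj ho
      exact (hagree0 i _ _ (hadj0 u v huv) hadj).mpr ho
    by_cases hxa : Oi i (Sum.inl (f i).1) (Sum.inr (i, false))
    · -- x → a, so x is a source: x → y, x → z, b → z, y → z
      left
      have hnyx : ¬ Oi i (Sum.inl (f i).2.1) (Sum.inl (f i).1) := fun h =>
        nadjYA (hia _ _ (hic _ _ _ h hxa))
      have hxy : Oi i (Sum.inl (f i).1) (Sum.inl (f i).2.1) := (hib _ _ adjXY).mpr hnyx
      have hnzx : ¬ Oi i (Sum.inl (f i).2.2) (Sum.inl (f i).1) := fun h =>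
        nadjZA (hia _ _ (hic _ _ _ h hxa))
      have hxz : Oi i (Sum.inl (f i).1) (Sum.inl (f i).2.2) := (hib _ _ adjXZ).mpr hnzx
      have hnzb : ¬ Oi i (Sum.inl (f i).2.2) (Sum.inr (i, true)) := fun h =>
        nadjXB (hia _ _ (hic _ _ _ hxz h))
      have hbz : Oi i (Sum.inr (i, true)) (Sum.inl (f i).2.2) :=
        of_not_not (fun h => hnzb ((hib _ _ adjZB).mpr h))
      have hnzy : ¬ Oi i (Sum.inl (f i).2.2) (Sum.inl (f i).2.1) := fun h =>
        nadjBY (hia _ _ (hic _ _ _ hbz h))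
      have hyz : Oi i (Sum.inl (f i).2.1) (Sum.inl (f i).2.2) := (hib _ _ adjYZ).mpr hnzy
      exact ⟨trans0 (f i).1 (f i).2.1 hd1 adjXY hxy, trans0 (f i).2.1 (f i).2.2 hd3 adjYZ hyz⟩
    · -- a → x, so x is a sink: y → x, z → x, z → b, z → y
      right
      have hax : Oi i (Sum.inr (i, false)) (Sum.inl (f i).1) :=
        of_not_not (fun h => hxa ((hib _ _ adjXA).mpr h))
      have hnxy : ¬ Oi i (Sum.inl (f i).1) (Sum.inl (f i).2.1) := fun h =>
        nadjAY (hia _ _ (hic _ _ _ hax h))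
      have hyx : Oi i (Sum.inl (f i).2.1) (Sum.inl (f i).1) := (hib _ _ adjXY.symm).mpr hnxy
      have hnxz : ¬ Oi i (Sum.inl (f i).1) (Sum.inl (f i).2.2) := fun h =>
        nadjAZ (hia _ _ (hic _ _ _ hax h))
      have hzx : Oi i (Sum.inl (f i).2.2) (Sum.inl (f i).1) := (hib _ _ adjXZ.symm).mpr hnxz
      have hnbz : ¬ Oi i (Sum.inr (i, true)) (Sum.inl (f i).2.2) := fun h =>
        nadjBX (hia _ _ (hic _ _ _ h hzx))
      have hzb : Oi i (Sum.inl (f i).2.2) (Sum.inr (i, true)) := (hib _ _ adjZB).mpr hnbz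
      have hnyz : ¬ Oi i (Sum.inl (f i).2.1) (Sum.inl (f i).2.2) := fun h =>
        nadjYB (hia _ _ (hic _ _ _ h hzb))
      have hzy : Oi i (Sum.inl (f i).2.2) (Sum.inl (f i).2.1) := (hib _ _ adjYZ.symm).mpr hnyz
      exact ⟨trans0 (f i).2.2 (f i).2.1 (Ne.symm hd3) adjYZ.symm hzy, trans0 (f i).2.1 (f i).1 (Ne.symm hd1) adjXY.symm hyx⟩
end

section
/- Let G be a finite graph, let μ₁, …, μ_k be pairwise disjoint modules of G partitioning V(G), and let Q be the quotient graph on {1,…,k} where i ~ j iff some vertex of μ_i is adjacent to some vertex of μ_j. If Q admits a transitive orientation O_Q and each induced subgraph G[μ_i] admits a transitive orientation O_i, then G admits a transitive orientation: orient edges inside each μ_i by O_i, and orient each edge between μ_i and μ_j (i ≠ j) from μ_i to μ_j iff (i,j) ∈ O_Q. -/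
/-- The quotient graph of a partition of the vertex set into modules. -/
def quotGraph {V : Type*} {k : ℕ} (G : SimpleGraph V) (μ : Fin k → Set V) :
    SimpleGraph (Fin k) :=
  SimpleGraph.fromRel (fun i j => ∃ u ∈ μ i, ∃ v ∈ μ j, G.Adj u v)

open Function

section

variable {V : Type*} {G : SimpleGraph V}

theorem IsModule.adj_of_adj {M N : Set V} (hM : IsModule G M) (hN : IsModule G N)
    (hMN : Disjoint M N) {u₀ v₀ u v : V} (hu₀ : u₀ ∈ M) (hv₀ : v₀ ∈ N) (h₀ : G.Adj u₀ v₀)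
    (hu : u ∈ M) (hv : v ∈ N) : G.Adj u v := by
  have hu₀v : G.Adj u₀ v :=
    ((hN.2 u₀ (hMN.notMem_of_mem_left hu₀)).resolve_right fun h => h v₀ hv₀ h₀) v hv
  have hvM := (hM.2 v (hMN.notMem_of_mem_right hv)).resolve_right fun h => h u₀ hu₀ hu₀v.symm
  exact (hvM u hu).symm

theorem adj_of_quotGraph_adj {k : ℕ} {μ : Fin k → Set V} (hmod : ∀ i, IsModule G (μ i))
    (hdisj : Pairwise (Disjoint on μ)) {i j : Fin k} (hij : (quotGraph G μ).Adj i j)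
    {u v : V} (hu : u ∈ μ i) (hv : v ∈ μ j) : G.Adj u v := by
  obtain ⟨hne, ⟨u₀, hu₀, v₀, hv₀, h₀⟩ | ⟨v₀, hv₀, u₀, hu₀, h₀⟩⟩ := hij
  · exact (hmod i).adj_of_adj (hmod j) (hdisj hne) hu₀ hv₀ h₀ hu hv
  · exact (hmod i).adj_of_adj (hmod j) (hdisj hne) hu₀ hv₀ h₀.symm hu hv

end

section

variable {V ι : Type*} {μ : ι → Set V} {OQ : ι → ι → Prop} {Oin : ι → V → V → Prop}

def substOrientation (μ : ι → Set V) (OQ : ι → ι → Prop) (Oin : ι → V → V → Prop) :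
    V → V → Prop :=
  fun u v => (∃ i, u ∈ μ i ∧ v ∈ μ i ∧ Oin i u v) ∨ (∃ i j, u ∈ μ i ∧ v ∈ μ j ∧ OQ i j)

theorem substOrientation_iff (hdisj : Pairwise (Disjoint on μ)) {i j : ι} {u v : V}
    (hu : u ∈ μ i) (hv : v ∈ μ j) :
    substOrientation μ OQ Oin u v ↔ (i = j ∧ Oin i u v) ∨ OQ i j := by
  have block_eq {v : V} {i j : ι} (hi : v ∈ μ i) (hj : v ∈ μ j) : i = j :=
    hdisj.eq (Set.not_disjoint_iff.2 ⟨v, hi, hj⟩)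
  constructor
  · rintro (⟨m, hum, hvm, h⟩ | ⟨m, n, hum, hvn, h⟩)
    · obtain rfl := block_eq hum hu
      obtain rfl := block_eq hvm hv
      exact Or.inl ⟨rfl, h⟩
    · obtain rfl := block_eq hum hu
      obtain rfl := block_eq hvn hv
      exact Or.inr h
  · rintro (⟨rfl, h⟩ | h)
    · exact Or.inl ⟨i, hu, hv, h⟩
    · exact Or.inr ⟨i, j, hu, hv, h⟩

theorem substOrientation_trans (hdisj : Pairwise (Disjoint on μ))
    (hOQ : ∀ i j l, OQ i j → OQ j l → OQ i l)
    (hOin : ∀ i u v w, Oin i u v → Oin i v w → Oin i u w) {i j l : ι} {u v w : V}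
    (hu : u ∈ μ i) (hv : v ∈ μ j) (hw : w ∈ μ l) :
    substOrientation μ OQ Oin u v → substOrientation μ OQ Oin v w →
      substOrientation μ OQ Oin u w := by
  rw [substOrientation_iff hdisj hu hv, substOrientation_iff hdisj hv hw,
    substOrientation_iff hdisj hu hw]
  rintro (⟨rfl, huv⟩ | huv) (⟨rfl, hvw⟩ | hvw)
  · exact Or.inl ⟨rfl, hOin i u v w huv hvw⟩
  · exact Or.inr hvw
  · exact Or.inr huv
  · exact Or.inr (hOQ i j l huv hvw)

end

theorem substOrientation_iff_not {V : Type*} {G : SimpleGraph V} {k : ℕ} {μ : Fin k → Set V}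
    {OQ : Fin k → Fin k → Prop} {Oin : Fin k → V → V → Prop}
    (hdisj : Pairwise (Disjoint on μ)) (hOQ : IsTransOrientation (quotGraph G μ) OQ)
    (hOin : ∀ i, IsTransOrientationOn G (μ i) (Oin i)) {i j : Fin k} {u v : V}
    (hu : u ∈ μ i) (hv : v ∈ μ j) (huv : G.Adj u v) :
    substOrientation μ OQ Oin u v ↔ ¬ substOrientation μ OQ Oin v u := by
  rw [substOrientation_iff hdisj hu hv, substOrientation_iff hdisj hv hu]
  by_cases hij : i = j
  · subst hij
    have hOQ_irrefl : ¬ OQ i i := fun h => (hOQ.1 i i h).ne rfl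
    simpa [hOQ_irrefl] using (hOin i).2.1 u v hu hv huv
  · simpa [hij, Ne.symm hij] using hOQ.2.1 i j ⟨hij, Or.inl ⟨u, hu, v, hv, huv⟩⟩

theorem transOrientation_from_quotient_general {V : Type*} {k : ℕ}
    (G : SimpleGraph V) (μ : Fin k → Set V)
    (hmod : ∀ i, IsModule G (μ i))
    (hdisj : ∀ i j, i ≠ j → Disjoint (μ i) (μ j))
    (hcov : ∀ v : V, ∃ i, v ∈ μ i)
    (OQ : Fin k → Fin k → Prop) (hOQ : IsTransOrientation (quotGraph G μ) OQ)
    (Oin : Fin k → V → V → Prop)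
    (hOin : ∀ i, IsTransOrientationOn G (μ i) (Oin i)) :
    IsTransOrientation G
      (fun u v => (∃ i, u ∈ μ i ∧ v ∈ μ i ∧ Oin i u v) ∨
                  (∃ i j, u ∈ μ i ∧ v ∈ μ j ∧ OQ i j)) := by
  refine ⟨?_, fun u v huv => ?_, fun u v w => ?_⟩
  · rintro u v (⟨i, -, -, h⟩ | ⟨i, j, hu, hv, h⟩)
    · exact ((hOin i).1 u v h).2.2
    · exact adj_of_quotGraph_adj hmod hdisj (hOQ.1 i j h) hu hv
  · obtain ⟨i, hu⟩ := hcov u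
    obtain ⟨j, hv⟩ := hcov v
    exact substOrientation_iff_not hdisj hOQ hOin hu hv huv
  · obtain ⟨i, hu⟩ := hcov u
    obtain ⟨j, hv⟩ := hcov v
    obtain ⟨l, hw⟩ := hcov w
    exact substOrientation_trans hdisj hOQ.2.2 (fun i => (hOin i).2.2) hu hv hw

theorem transOrientation_from_quotient {V : Type*} [Fintype V] {k : ℕ}
    (G : SimpleGraph V) (μ : Fin k → Set V)
    (hmod : ∀ i, IsModule G (μ i))
    (hdisj : ∀ i j, i ≠ j → Disjoint (μ i) (μ j))
    (hcov : ∀ v : V, ∃ i, v ∈ μ i)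
    (OQ : Fin k → Fin k → Prop) (hOQ : IsTransOrientation (quotGraph G μ) OQ)
    (Oin : Fin k → V → V → Prop)
    (hOin : ∀ i, IsTransOrientationOn G (μ i) (Oin i)) :
    IsTransOrientation G
      (fun u v => (∃ i, u ∈ μ i ∧ v ∈ μ i ∧ Oin i u v) ∨
                  (∃ i j, u ∈ μ i ∧ v ∈ μ j ∧ OQ i j)) :=
  transOrientation_from_quotient_general G μ hmod hdisj hcov OQ hOQ Oin hOin
end
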